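/- In any orthomodular lattice, a ≡ b = (a →₁ b) ∩ (b →₁ a), where a ≡ b := (a∩b)∪(a'∩b') and a →₁ b := a' ∪ (a∩b). -/

import Mathlib

/-- An ortholattice as an algebra ⟨α, ', ∪, ∩⟩ with join `j` and
orthocomplement `c` primitive, and meet defined by De Morgan. -/
structure OrthoLattice (α : Type*) where
  j : α → α → α
  c : α → α
  j_comm : ∀ a b, j a b = j b a
  j_assoc : ∀ a b d, j (j a b) d = j a (j b d)
  c_invol : ∀ a, c (c a) = a
  j_top : ∀ a b, j a (j b (c b)) = j b (c b)
  absorb : ∀ a b, j a (c (j (c a) (c b))) = a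

namespace OrthoLattice

variable {α : Type*}

/-- meet: a ∩ b = (a' ∪ b')' -/
def m (L : OrthoLattice α) (a b : α) : α := L.c (L.j (L.c a) (L.c b))

/-- the unit 1 = a ∪ a' -/
def one (L : OrthoLattice α) (a : α) : α := L.j a (L.c a)

/-- quantum equivalence a ≡ b = (a∩b) ∪ (a'∩b') -/
def equiv (L : OrthoLattice α) (a b : α) : α := L.j (L.m a b) (L.m (L.c a) (L.c b))

/-- classical equivalence a ≡₀ b = (a'∪b) ∩ (a∪b') -/
def equiv0 (L : OrthoLattice α) (a b : α) : α := L.m (L.j (L.c a) b) (L.j a (L.c b))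

/-- Sasaki hook a →₁ b = a' ∪ (a ∩ b) -/
def sasaki (L : OrthoLattice α) (a b : α) : α := L.j (L.c a) (L.m a b)

end OrthoLattice

/-!
Put `x = a ∩ b`. Both Sasaki hooks `a →₁ b = a' ∪ x` and `b →₁ a = b' ∪ x` lie above `x`, so
orthomodularity gives `(a →₁ b) ∩ (b →₁ a) = x ∪ (x' ∩ (a →₁ b) ∩ (b →₁ a))`. Since `x ≤ a`, the
dual orthomodular law gives `x' ∩ (a' ∪ x) = a'`, and likewise `x' ∩ (b' ∪ x) = b'`; hence the
right-hand side is `x ∪ (a' ∩ b') = a ≡ b`.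
-/

namespace OrthoLattice

variable {α : Type*} (L : OrthoLattice α)

def IsOrthomodular : Prop := ∀ a b : α, L.j a (L.m (L.c a) (L.j a b)) = L.j a b

def le (a b : α) : Prop := L.j a b = b

theorem c_j (a b : α) : L.c (L.j a b) = L.m (L.c a) (L.c b) := by
  rw [m, L.c_invol, L.c_invol]

theorem c_m (a b : α) : L.c (L.m a b) = L.j (L.c a) (L.c b) := L.c_invol _

theorem m_comm (a b : α) : L.m a b = L.m b a := by
  rw [m, L.j_comm, ← m]

theorem m_assoc (a b d : α) : L.m (L.m a b) d = L.m a (L.m b d) := by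
  rw [m, m, m, m, L.c_invol, L.c_invol, L.j_assoc]

theorem j_m_self (a b : α) : L.j a (L.m a b) = a := L.absorb a b

theorem m_j_self (a b : α) : L.m a (L.j a b) = a := by
  have h := L.j_m_self (L.c a) (L.c b)
  rw [← L.c_j] at h
  rw [m, h, L.c_invol]

theorem j_idem (a : α) : L.j a a = a :=
  calc L.j a a = L.j a (L.m a (L.j a a)) := by rw [L.m_j_self]
    _ = a := L.j_m_self a _

theorem m_idem (a : α) : L.m a a = a := by
  rw [m, L.j_idem, L.c_invol]

theorem m_m_distrib_left (a b d : α) : L.m a (L.m b d) = L.m (L.m a b) (L.m a d) := by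
  rw [L.m_assoc a b, ← L.m_assoc b a d, L.m_comm b a, L.m_assoc a b d, ← L.m_assoc a a, L.m_idem]

variable {L}

theorem m_eq_left {a b : α} : L.m a b = a ↔ L.le a b := by
  constructor
  · intro h
    rw [le, ← h, L.j_comm, L.m_comm, L.j_m_self]
  · intro h
    rw [← h, L.m_j_self]

theorem le_j_left (a b : α) : L.le a (L.j a b) := by
  rw [le, ← L.j_assoc, L.j_idem]

theorem m_le_left (a b : α) : L.le (L.m a b) a :=
  m_eq_left.mp (by rw [L.m_comm, ← L.m_assoc, L.m_idem])

theorem m_le_right (a b : α) : L.le (L.m a b) b :=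
  m_eq_left.mp (by rw [L.m_assoc, L.m_idem])

theorem le_m {a b d : α} (ha : L.le d a) (hb : L.le d b) : L.le d (L.m a b) := by
  rw [← m_eq_left] at *
  rw [← L.m_assoc, ha, hb]

theorem IsOrthomodular.j_m_c_of_le (hOM : L.IsOrthomodular) {a x : α} (h : L.le a x) :
    L.j a (L.m (L.c a) x) = x := by
  have := hOM a x
  rwa [h] at this

theorem IsOrthomodular.m_c_j_c_of_le (hOM : L.IsOrthomodular) {x a : α} (h : L.le x a) :
    L.m (L.c x) (L.j x (L.c a)) = L.c a := by
  have := congrArg L.c (hOM.j_m_c_of_le h)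
  rwa [L.c_j, L.c_m, L.c_invol] at this

end OrthoLattice

/-- in any orthomodular lattice, a ≡ b = (a →₁ b) ∩ (b →₁ a). -/
theorem stmt8 {α : Type*} (L : OrthoLattice α)
    (hOM : ∀ a b : α, L.j a (L.m (L.c a) (L.j a b)) = L.j a b) :
    ∀ a b : α, L.equiv a b = L.m (L.sasaki a b) (L.sasaki b a) := by
  intro a b
  have hOM : L.IsOrthomodular := hOM
  have hp : L.sasaki a b = L.j (L.m a b) (L.c a) := L.j_comm _ _
  have hq : L.sasaki b a = L.j (L.m a b) (L.c b) := by rw [OrthoLattice.sasaki, L.m_comm, L.j_comm]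
  have hx : L.le (L.m a b) (L.m (L.sasaki a b) (L.sasaki b a)) := by
    rw [hp, hq]
    exact OrthoLattice.le_m (L.le_j_left _ _) (L.le_j_left _ _)
  rw [← hOM.j_m_c_of_le hx, L.m_m_distrib_left, hp, hq, hOM.m_c_j_c_of_le (L.m_le_left a b),
    hOM.m_c_j_c_of_le (L.m_le_right a b)]
  rfl
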